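/- Let p₀, p₁, …, p_k be distinct points in ℝ² no three of which are collinear, and suppose there is NO vector u ∈ ℝ² with ⟪u, pⱼ − p₀⟫ > 0 for all j = 1, …, k (i.e. the segments p₀pⱼ leave no angle larger than π free at p₀, so the star of edges at p₀ is not pointed). Let v₀, v₁, …, v_k ∈ ℝ² satisfy ⟪pᵢ − pⱼ, vᵢ − vⱼ⟫ ≥ 0 for all 0 ≤ i < j ≤ k and ⟪p₀ − pⱼ, v₀ − vⱼ⟫ = 0 for all j = 1, …, k. Then ⟪pᵢ − pⱼ, vᵢ − vⱼ⟫ = 0 for all 0 ≤ i < j ≤ k. -/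

import Mathlib

open scoped RealInnerProductSpace

noncomputable def jm (x : EuclideanSpace ℝ (Fin 2)) : EuclideanSpace ℝ (Fin 2) :=
  (WithLp.equiv 2 _).symm ![-(x 1), x 0]
lemma inner_jm (x y : EuclideanSpace ℝ (Fin 2)) : ⟪jm x, y⟫ = x 0 * y 1 - x 1 * y 0 := by
  simp [jm, PiLp.inner_apply, Fin.sum_univ_two]; ring
lemma jm_skew (x y : EuclideanSpace ℝ (Fin 2)) : ⟪jm x, y⟫ = -⟪jm y, x⟫ := by
  rw [inner_jm, inner_jm]; ring
lemma jm_self (x : EuclideanSpace ℝ (Fin 2)) : ⟪jm x, x⟫ = 0 := by rw [inner_jm]; ring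
lemma jm0 (x : EuclideanSpace ℝ (Fin 2)) : jm x 0 = -(x 1) := by simp [jm]
lemma jm1 (x : EuclideanSpace ℝ (Fin 2)) : jm x 1 = x 0 := by simp [jm]

lemma strain_formula (a b : EuclideanSpace ℝ (Fin 2)) (s t : ℝ) :
    ⟪a - b, s • jm a - t • jm b⟫ = (t - s) * ⟪jm a, b⟫ := by
  rw [inner_jm]
  simp [PiLp.inner_apply, Fin.sum_univ_two, jm0, jm1]
  ring

lemma norm_sq_coord (x : EuclideanSpace ℝ (Fin 2)) : ‖x‖ ^ 2 = x 0 ^ 2 + x 1 ^ 2 := by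
  rw [EuclideanSpace.real_norm_sq_eq]
  simp [Fin.sum_univ_two]

lemma coord_ne_zero {x : EuclideanSpace ℝ (Fin 2)} (hx : x ≠ 0) : x 0 ^ 2 + x 1 ^ 2 ≠ 0 := by
  intro h
  apply hx
  have h0 : x 0 = 0 := by nlinarith [sq_nonneg (x 0), sq_nonneg (x 1)]
  have h1 : x 1 = 0 := by nlinarith [sq_nonneg (x 0), sq_nonneg (x 1)]
  ext i
  fin_cases i <;> simp [h0, h1]

lemma ortho_2d {x y : EuclideanSpace ℝ (Fin 2)} (hx : x ≠ 0) (h : ⟪x, y⟫ = 0) :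
    y = (⟪jm x, y⟫ / ‖x‖ ^ 2) • jm x := by
  have hn := coord_ne_zero hx
  have h' : x 0 * y 0 + x 1 * y 1 = 0 := by
    have h2 := h
    simp [PiLp.inner_apply, Fin.sum_univ_two] at h2
    linear_combination h2
  rw [inner_jm, norm_sq_coord]
  ext i
  fin_cases i <;>
  · simp [jm0, jm1]
    field_simp
    first
    | linear_combination x 0 * h'
    | linear_combination x 1 * h'

lemma collin_2d {x y : EuclideanSpace ℝ (Fin 2)} (hy : y ≠ 0) (h : ⟪jm x, y⟫ = 0) :
    ∃ c : ℝ, x = c • y := by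
  have hn := coord_ne_zero hy
  have h' : x 0 * y 1 - x 1 * y 0 = 0 := by rw [← inner_jm]; exact h
  refine ⟨(x 0 * y 0 + x 1 * y 1) / (y 0 ^ 2 + y 1 ^ 2), ?_⟩
  ext i
  fin_cases i <;>
  · simp
    field_simp
    first
    | linear_combination y 1 * h'
    | linear_combination (- y 0) * h'

lemma collinear_of_sub_smul {a b c : EuclideanSpace ℝ (Fin 2)} {r : ℝ}
    (h : b - a = r • (c - a)) : Collinear ℝ ({a, b, c} : Set (EuclideanSpace ℝ (Fin 2))) := by
  rw [collinear_iff_of_mem (Set.mem_insert a _)]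
  refine ⟨c - a, ?_⟩
  intro q hq
  rcases hq with rfl | rfl | rfl
  · exact ⟨0, by simp⟩
  · exact ⟨r, by rw [← h, vadd_eq_add, sub_add_cancel]⟩
  · exact ⟨1, by simp⟩

/-- If the star of edges from `p₀` to `p₁, …, p_k` is not pointed
at `p₀` (there is no direction `u` making positive inner product with every
`pⱼ - p₀`), then any expansive motion that is tight on all the star edges is
tight on all pairs. -/
theorem non_pointed_star_tight_implies_all_tight
    (k : ℕ) (p : Fin (k + 1) → EuclideanSpace ℝ (Fin 2))
    (hinj : Function.Injective p)
    (hgp : ∀ i j l : Fin (k + 1), i ≠ j → j ≠ l → i ≠ l →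
      ¬ Collinear ℝ ({p i, p j, p l} : Set (EuclideanSpace ℝ (Fin 2))))
    (hnotpointed : ¬ ∃ u : EuclideanSpace ℝ (Fin 2),
      ∀ j : Fin (k + 1), j ≠ 0 → 0 < ⟪u, p j - p 0⟫)
    (v : Fin (k + 1) → EuclideanSpace ℝ (Fin 2))
    (hexp : ∀ i j : Fin (k + 1), 0 ≤ ⟪p i - p j, v i - v j⟫)
    (htight : ∀ j : Fin (k + 1), j ≠ 0 → ⟪p 0 - p j, v 0 - v j⟫ = 0) :
    ∀ i j : Fin (k + 1), ⟪p i - p j, v i - v j⟫ = 0 := by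
  classical
  set q : Fin (k + 1) → EuclideanSpace ℝ (Fin 2) := fun j => p j - p 0 with hqdef
  set w : Fin (k + 1) → EuclideanSpace ℝ (Fin 2) := fun j => v j - v 0 with hwdef
  have hqne : ∀ j : Fin (k + 1), j ≠ 0 → q j ≠ 0 := by
    intro j hj
    exact sub_ne_zero.2 fun h => hj (hinj h)
  have hpq : ∀ i j, p i - p j = q i - q j := by intro i j; simp [hqdef]
  have hvw : ∀ i j, v i - v j = w i - w j := by intro i j; simp [hwdef]
  set t : Fin (k + 1) → ℝ := fun j => ⟪jm (q j), w j⟫ / ‖q j‖ ^ 2 with htdef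
  have hwt : ∀ j, j ≠ 0 → w j = t j • jm (q j) := by
    intro j hj
    refine ortho_2d (hqne j hj) ?_
    have h := htight j hj
    have e1 : p 0 - p j = -(q j) := by simp [hqdef]
    have e2 : v 0 - v j = -(w j) := by simp [hwdef]
    rw [e1, e2, inner_neg_neg] at h
    exact h
  have strain : ∀ i j, i ≠ 0 → j ≠ 0 →
      ⟪p i - p j, v i - v j⟫ = (t j - t i) * ⟪jm (q i), q j⟫ := by
    intro i j hi hj
    rw [hpq, hvw, hwt i hi, hwt j hj, strain_formula]
  have hωne : ∀ i j, i ≠ 0 → j ≠ 0 → i ≠ j → ⟪jm (q i), q j⟫ ≠ 0 := by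
    intro i j hi hj hij h
    obtain ⟨c, hc⟩ := collin_2d (hqne j hj) h
    refine hgp 0 i j (Ne.symm hi) hij (Ne.symm hj) ?_
    exact collinear_of_sub_smul (a := p 0) (b := p i) (c := p j) (r := c) hc
  have horder : ∀ i j, i ≠ 0 → j ≠ 0 → t j < t i → ⟪jm (q i), q j⟫ < 0 := by
    intro i j hi hj hlt
    have h := hexp i j
    rw [strain i j hi hj] at h
    have hij : i ≠ j := fun h' => absurd (h' ▸ rfl) hlt.ne
    rcases (hωne i j hi hj hij).lt_or_gt with h' | h'
    · exact h'
    · exfalso; nlinarith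
  have horder' : ∀ i j, i ≠ 0 → j ≠ 0 → t i < t j → 0 < ⟪jm (q i), q j⟫ := by
    intro i j hi hj hlt
    have := horder j i hj hi hlt
    rw [jm_skew] at this
    linarith
  -- convex hull step
  set s : Finset (Fin (k + 1)) := Finset.univ.filter (fun j => j ≠ 0) with hsdef
  have hmem_s : ∀ j, j ∈ s ↔ j ≠ 0 := by intro j; simp [hsdef]
  have hqinj : ∀ x ∈ s, ∀ y ∈ s, q x = q y → x = y := by
    intro x _ y _ h
    exact hinj (sub_left_injective h)
  have hconv : (0 : EuclideanSpace ℝ (Fin 2)) ∈ convexHull ℝ ((s.image q : Finset _) : Set (EuclideanSpace ℝ (Fin 2))) := by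
    by_contra hc
    obtain ⟨f, c, hf0, hfb⟩ := geometric_hahn_banach_point_closed
      (convex_convexHull ℝ _) ((s.image q).finite_toSet.isClosed_convexHull ℝ) hc
    refine hnotpointed ⟨(InnerProductSpace.toDual ℝ _).symm f, fun j hj => ?_⟩
    have hmem : q j ∈ convexHull ℝ ((s.image q : Finset _) : Set (EuclideanSpace ℝ (Fin 2))) :=
      subset_convexHull ℝ _ (by
        simp only [Finset.coe_image, Set.mem_image, Finset.mem_coe]
        exact ⟨j, (hmem_s j).2 hj, rfl⟩)
    have h2 := hfb _ hmem
    have h0 : f 0 = 0 := map_zero f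
    rw [InnerProductSpace.toDual_symm_apply]
    show (0:ℝ) < f (p j - p 0)
    have : p j - p 0 = q j := rfl
    rw [this]
    linarith
  obtain ⟨W, hW0, hW1, hWc⟩ := Finset.mem_convexHull.1 hconv
  rw [Finset.centerMass_eq_of_sum_1 _ _ hW1] at hWc
  set μ : Fin (k + 1) → ℝ := fun j => W (q j) with hμdef
  have hμ1 : ∑ j ∈ s, μ j = 1 := by
    show ∑ j ∈ s, W (q j) = 1
    rw [← Finset.sum_image (s := s) (g := q) (f := fun y => W y) hqinj]
    exact hW1
  have hμq : ∑ j ∈ s, μ j • q j = 0 := by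
    show ∑ j ∈ s, W (q j) • q j = 0
    rw [← Finset.sum_image (s := s) (g := q) (f := fun y => W y • y) hqinj]
    simpa using hWc
  have hμ0 : ∀ j ∈ s, 0 ≤ μ j := fun j hj => hW0 _ (Finset.mem_image_of_mem q hj)
  set T : Finset (Fin (k + 1)) := s.filter (fun j => 0 < μ j) with hTdef
  have hTs : T ⊆ s := Finset.filter_subset _ _
  have hμT : ∀ j ∈ T, 0 < μ j := fun j hj => (Finset.mem_filter.1 hj).2
  have hT1 : ∑ j ∈ T, μ j = 1 := by
    rw [hTdef, Finset.sum_filter_of_ne (fun x hx hne => lt_of_le_of_ne (hμ0 x hx) (Ne.symm hne))]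
    exact hμ1
  have hTq : ∑ j ∈ T, μ j • q j = 0 := by
    rw [hTdef, Finset.sum_filter_of_ne (fun x hx hne => ?_)]
    · exact hμq
    · refine lt_of_le_of_ne (hμ0 x hx) fun h0 => hne ?_
      rw [← h0, zero_smul]
  have hTne : T.Nonempty := by
    rcases Finset.eq_empty_or_nonempty T with h | h
    · rw [h, Finset.sum_empty] at hT1; norm_num at hT1
    · exact h
  have hinner : ∀ (B : Finset (Fin (k + 1))) (x : EuclideanSpace ℝ (Fin 2)),
      ∑ j ∈ B, μ j * ⟪jm x, q j⟫ = ⟪jm x, ∑ j ∈ B, μ j • q j⟫ := by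
    intro B x
    rw [inner_sum]
    exact Finset.sum_congr rfl fun j _ => (real_inner_smul_right _ _ _).symm
  obtain ⟨a, haT, hamax⟩ := T.exists_max_image t hTne
  have haz : a ≠ 0 := (hmem_s a).1 (hTs haT)
  -- Step A : t is constant on T
  have hconstT : ∀ j ∈ T, t j = t a := by
    by_contra hcon
    push_neg at hcon
    obtain ⟨b, hbT, hbne⟩ := hcon
    set S : Finset (Fin (k + 1)) := T.filter (fun j => t j = t a) with hSdef
    have hSs : S ⊆ T := Finset.filter_subset _ _
    have haS : a ∈ S := Finset.mem_filter.2 ⟨haT, rfl⟩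
    have hposS : ∀ i ∈ S, 0 < ∑ j ∈ S, μ j * ⟪jm (q i), q j⟫ := by
      intro i hiS
      have hiT := hSs hiS
      have hiz : i ≠ 0 := (hmem_s i).1 (hTs hiT)
      have hti : t i = t a := (Finset.mem_filter.1 hiS).2
      have hsplit := Finset.sum_filter_add_sum_filter_not T (fun j => t j = t a)
        (fun j => μ j * ⟪jm (q i), q j⟫)
      have hzT : ∑ j ∈ T, μ j * ⟪jm (q i), q j⟫ = 0 := by
        rw [hinner T (q i), hTq, inner_zero_right]
      have hneg : ∑ j ∈ T.filter (fun j => ¬ t j = t a), μ j * ⟪jm (q i), q j⟫ < 0 := by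
        refine Finset.sum_neg (fun j hj => ?_) ⟨b, Finset.mem_filter.2 ⟨hbT, hbne⟩⟩
        obtain ⟨hjT, hjne⟩ := Finset.mem_filter.1 hj
        have hjz : j ≠ 0 := (hmem_s j).1 (hTs hjT)
        have hjlt : t j < t i := by
          rcases lt_or_eq_of_le (hamax j hjT) with h | h
          · rw [hti]; exact h
          · exact absurd h hjne
        exact mul_neg_of_pos_of_neg (hμT j hjT) (horder i j hiz hjz hjlt)
      linarith
    set z : EuclideanSpace ℝ (Fin 2) := ∑ j ∈ S, μ j • q j with hzdef
    have hdouble : ∑ i ∈ S, μ i * ∑ j ∈ S, μ j * ⟪jm (q i), q j⟫ = 0 := by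
      have e1 : ∀ i ∈ S, μ i * ∑ j ∈ S, μ j * ⟪jm (q i), q j⟫ = μ i * (-⟪jm z, q i⟫) := by
        intro i _
        rw [hinner S (q i), ← hzdef, jm_skew]
      rw [Finset.sum_congr rfl e1]
      have : ∑ i ∈ S, μ i * (-⟪jm z, q i⟫) = -∑ i ∈ S, μ i * ⟪jm z, q i⟫ := by
        rw [← Finset.sum_neg_distrib]
        exact Finset.sum_congr rfl fun i _ => by ring
      rw [this, hinner S z, ← hzdef, jm_self, neg_zero]
    have hpos : 0 < ∑ i ∈ S, μ i * ∑ j ∈ S, μ j * ⟪jm (q i), q j⟫ :=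
      Finset.sum_pos (fun i hi => mul_pos (hμT i (hSs hi)) (hposS i hi)) ⟨a, haS⟩
    linarith
  -- Step B : t is constant on s
  have hconst : ∀ j ∈ s, t j = t a := by
    intro j hj
    have hjz : j ≠ 0 := (hmem_s j).1 hj
    by_contra hne
    have hsum0 : ∑ i ∈ T, μ i * ⟪jm (q j), q i⟫ = 0 := by
      rw [hinner T (q j), hTq, inner_zero_right]
    rcases lt_or_gt_of_ne hne with h | h
    · have : ∑ i ∈ T, μ i * ⟪jm (q j), q i⟫ > 0 := by
        refine Finset.sum_pos (fun i hi => ?_) hTne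
        have hiz : i ≠ 0 := (hmem_s i).1 (hTs hi)
        exact mul_pos (hμT i hi) (horder' j i hjz hiz (by rw [hconstT i hi]; exact h))
      linarith
    · have : ∑ i ∈ T, μ i * ⟪jm (q j), q i⟫ < 0 := by
        refine Finset.sum_neg (fun i hi => ?_) hTne
        have hiz : i ≠ 0 := (hmem_s i).1 (hTs hi)
        exact mul_neg_of_pos_of_neg (hμT i hi) (horder j i hjz hiz (by rw [hconstT i hi]; exact h))
      linarith
  -- conclusion
  intro i j
  by_cases hij : i = j
  · simp [hij]
  by_cases hi : i = 0
  · subst hi; exact htight j (Ne.symm hij)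
  by_cases hj : j = 0
  · subst hj
    have h := htight i hi
    rw [show p 0 - p i = -(p i - p 0) from (neg_sub _ _).symm,
      show v 0 - v i = -(v i - v 0) from (neg_sub _ _).symm, inner_neg_neg] at h
    exact h
  · rw [strain i j hi hj, hconst i ((hmem_s i).2 hi), hconst j ((hmem_s j).2 hj)]
    ring
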